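/- arXiv:1708.06397 — 3 statements merged into one kernel-verified Lean document; each statement's English description precedes it below -/
import Mathlib

section
/- If a nonnegative integrable function h on ℝ^n with ∫ h = 1 tiles ℝ^n at level 1 by translates along a countable set S (∑_{α∈S} h(w−α) = 1 a.e.), then there exists C > 0 such that every cube in ℝ^n of side length C contains at least one point of S. -/
/-!
Write `ν` for the probability measure `h dx`. Integrating the tiling identity over a measurable
set `A` gives `∑_{α ∈ S} ν (A - α) = vol A`. Choose `R` with `ν (B_R)ᶜ < 1 / (2ⁿ + 1)` and
suppose a cube `Q` of side `4R` misses `S`; let `Q'` be the concentric cube of side `2R`. Every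
translate `Q' - α` then avoids `B_R`, and since each `α ∈ S` with `u + α ∈ Q'` satisfies
`B_R + α ⊆ Q - u`, the identity for `A = Q - u` shows that no point `u` lies in more than
`vol Q / ν B_R` of these translates. Hence `vol Q' ≤ vol Q · ν (B_R)ᶜ / ν B_R`, that is
`ν B_R ≤ 2ⁿ ν (B_R)ᶜ`, contradicting the choice of `R`.
-/

open MeasureTheory Set Filter Metric Topology
open scoped ENNReal

theorem tsum_measure_mul_le_of_tsum_indicator_mul_le {X ι : Type*} [MeasurableSpace X]
    [Countable ι] (ν : Measure X) {A : ι → Set X} {B : Set X} {c M : ℝ≥0∞}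
    (hA : ∀ i, MeasurableSet (A i)) (hB : MeasurableSet B) (hAB : ∀ i, A i ⊆ B)
    (hM : ∀ x, (∑' i, (A i).indicator 1 x) * c ≤ M) :
    (∑' i, ν (A i)) * c ≤ M * ν B := by
  have hmeas : ∀ i, Measurable ((A i).indicator (1 : X → ℝ≥0∞)) :=
    fun i => measurable_one.indicator (hA i)
  calc (∑' i, ν (A i)) * c = (∫⁻ x, ∑' i, (A i).indicator 1 x ∂ν) * c := by
        simp_rw [lintegral_tsum fun i => (hmeas i).aemeasurable, lintegral_indicator_one (hA _)]
    _ = ∫⁻ x, (∑' i, (A i).indicator 1 x) * c ∂ν :=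
        (lintegral_mul_const c (Measurable.tsum hmeas)).symm
    _ ≤ ∫⁻ x, B.indicator (fun _ => M) x ∂ν := lintegral_mono fun x => ?_
    _ = M * ν B := lintegral_indicator_const hB M
  by_cases hx : x ∈ B
  · simpa [indicator_of_mem hx] using hM x
  · have hxA : ∀ i, x ∉ A i := fun i hxi => hx (hAB i hxi)
    simp [indicator_of_notMem hx, indicator_of_notMem (hxA _)]

theorem exists_pos_measure_compl_closedBall_lt {E : Type*} [MeasurableSpace E]
    [PseudoMetricSpace E] [CompleteSpace E] [SecondCountableTopology E] [BorelSpace E]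
    (ν : Measure E) [IsFiniteMeasure ν] (x : E) {ε : ℝ≥0∞} (hε : 0 < ε) :
    ∃ R > 0, ν (closedBall x R)ᶜ < ε := by
  have hlim : Tendsto (fun R => ν (closedBall x R)ᶜ) atTop (𝓝 0) := by
    simpa using tendsto_measure_compl_closedBall_of_isTightMeasureSet
      (isTightMeasureSet_singleton (μ := ν)) x
  obtain ⟨R, hRε, hR⟩ := ((hlim.eventually (gt_mem_nhds hε)).and (eventually_gt_atTop 0)).exists
  exact ⟨R, hR, hRε⟩

section Tiling

variable {G : Type*} [MeasurableSpace G] [AddGroup G] [MeasurableAdd G] {μ : Measure G}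
  [μ.IsAddRightInvariant] {H : G → ℝ≥0∞} {S : Set G}

theorem tsum_withDensity_preimage_add_right (hH : AEMeasurable H μ) (hS : S.Countable)
    (htile : ∀ᵐ w ∂μ, ∑' α : S, H (w - α) = 1) {A : Set G} (hA : MeasurableSet A) :
    ∑' α : S, μ.withDensity H ((· + (α : G)) ⁻¹' A) = μ A := by
  have := hS.to_subtype
  calc ∑' α : S, μ.withDensity H ((· + (α : G)) ⁻¹' A)
      = ∑' α : S, ∫⁻ w in A, H (w - α) ∂μ := by
        refine tsum_congr fun α => ?_
        rw [withDensity_apply H (hA.preimage (measurable_add_const _))]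
        simpa using (measurePreserving_add_right μ (α : G)).setLIntegral_comp_preimage_emb
          (measurableEmbedding_addRight _) (fun w => H (w - α)) A
    _ = ∫⁻ w in A, ∑' α : S, H (w - α) ∂μ :=
        (lintegral_tsum fun α => (hH.comp_quasiMeasurePreserving
          (measurePreserving_sub_right μ _).quasiMeasurePreserving).restrict).symm
    _ = μ A := by
        rw [lintegral_congr_ae (ae_restrict_of_ae htile)]
        simp

theorem tsum_indicator_mul_withDensity_le (hH : AEMeasurable H μ) (hS : S.Countable)
    (htile : ∀ᵐ w ∂μ, ∑' α : S, H (w - α) = 1) {P K Q : Set G} (hQ : MeasurableSet Q)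
    (hPKQ : ∀ α ∈ P, ∀ v ∈ K, v + α ∈ Q) :
    (∑' α : S, P.indicator 1 (α : G)) * μ.withDensity H K ≤ μ Q := by
  calc (∑' α : S, P.indicator 1 (α : G)) * μ.withDensity H K
      = ∑' α : S, P.indicator 1 (α : G) * μ.withDensity H K := ENNReal.tsum_mul_right.symm
    _ ≤ ∑' α : S, μ.withDensity H ((· + (α : G)) ⁻¹' Q) := ENNReal.tsum_le_tsum fun α => ?_
    _ = μ Q := tsum_withDensity_preimage_add_right hH hS htile hQ
  by_cases hα : (α : G) ∈ P
  · rw [indicator_of_mem hα, Pi.one_apply, one_mul]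
    exact measure_mono fun v hv => hPKQ α hα v hv
  · simp [indicator_of_notMem hα]

end Tiling

namespace EuclideanSpace

variable {n : ℕ}

def cube (c : Fin n → ℝ) (r : ℝ) : Set (EuclideanSpace ℝ (Fin n)) :=
  {w | ∀ i, |w i - c i| ≤ r}

theorem cube_eq_preimage_ofLp (c : Fin n → ℝ) (r : ℝ) :
    cube c r = WithLp.ofLp ⁻¹' Icc (fun i => c i - r) (fun i => c i + r) := by
  ext w
  simp only [cube, mem_ofPred_eq, mem_preimage, mem_Icc, Pi.le_def, abs_sub_le_iff, ← forall_and]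
  refine forall_congr' fun i => ?_
  constructor <;> rintro ⟨h₁, h₂⟩ <;> constructor <;> linarith

theorem measurableSet_cube (c : Fin n → ℝ) (r : ℝ) : MeasurableSet (cube c r) := by
  rw [cube_eq_preimage_ofLp]
  exact measurableSet_Icc.preimage (WithLp.measurable_ofLp 2 _)

theorem volume_cube (c : Fin n → ℝ) (r : ℝ) :
    volume (cube c r) = ENNReal.ofReal (2 * r) ^ n := by
  rw [cube_eq_preimage_ofLp, (PiLp.volume_preserving_ofLp _).measure_preimage
    measurableSet_Icc.nullMeasurableSet, Real.volume_Icc_pi]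
  simp [two_mul]

theorem add_mem_cube {c : Fin n → ℝ} {r R : ℝ} {w v : EuclideanSpace ℝ (Fin n)}
    (hw : w ∈ cube c r) (hv : ‖v‖ ≤ R) : w + v ∈ cube c (r + R) := fun i =>
  calc |(w + v) i - c i| = |(w i - c i) + v i| := by simp [sub_add_eq_add_sub]
    _ ≤ |w i - c i| + |v i| := abs_add_le _ _
    _ ≤ r + R := add_le_add (hw i) ((PiLp.norm_apply_le v i).trans hv)

theorem withDensity_closedBall_le_of_forall_notMem_cube {H : EuclideanSpace ℝ (Fin n) → ℝ≥0∞}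
    (hH : AEMeasurable H) {S : Set (EuclideanSpace ℝ (Fin n))} (hS : S.Countable)
    (htile : ∀ᵐ w, ∑' α : S, H (w - α) = 1) {c : Fin n → ℝ} {R : ℝ} (hR : 0 < R)
    (hSc : ∀ s ∈ S, s ∉ cube c (2 * R)) :
    volume.withDensity H (closedBall 0 R) ≤ 2 ^ n * volume.withDensity H (closedBall 0 R)ᶜ := by
  set ν := volume.withDensity H
  set K := closedBall (0 : EuclideanSpace ℝ (Fin n)) R
  have := hS.to_subtype
  have htranslate : ∀ α : S, (· + (α : EuclideanSpace ℝ (Fin n))) ⁻¹' cube c R ⊆ Kᶜ :=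
    fun α u hu huK => hSc α α.2 <| by
      simpa [two_mul] using
        add_mem_cube hu (v := -u) (by simpa using mem_closedBall_zero_iff.1 huK)
  have hmultiplicity : ∀ u,
      (∑' α : S, ((· + (α : EuclideanSpace ℝ (Fin n))) ⁻¹' cube c R).indicator 1 u) * ν K ≤
        volume (cube c (2 * R)) := by
    intro u
    have := tsum_indicator_mul_withDensity_le hH hS htile (P := {α | u + α ∈ cube c R}) (K := K)
      ((measurableSet_cube c (2 * R)).preimage (measurable_add_const u)) fun α hα v hv => by
        simpa [add_comm, add_left_comm, two_mul] using
          add_mem_cube hα (mem_closedBall_zero_iff.1 hv)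
    rwa [measure_preimage_add_right] at this
  have hbound := tsum_measure_mul_le_of_tsum_indicator_mul_le ν
    (fun α => (measurableSet_cube c R).preimage (measurable_add_const _))
    measurableSet_closedBall.compl htranslate hmultiplicity
  have hvol : volume (cube c (2 * R)) = 2 ^ n * volume (cube c R) := by
    rw [volume_cube, volume_cube, ← mul_pow, ENNReal.ofReal_mul zero_le_two, ENNReal.ofReal_ofNat]
  rw [tsum_withDensity_preimage_add_right hH hS htile (measurableSet_cube c R), hvol,
    mul_comm (2 ^ n : ℝ≥0∞), mul_assoc] at hbound
  exact (ENNReal.mul_le_mul_iff_right (by simp [volume_cube, hR])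
    (by rw [volume_cube]; exact ENNReal.pow_ne_top ENNReal.ofReal_ne_top)).1 hbound

end EuclideanSpace

theorem tiling_implies_well_distributed_general {n : ℕ}
    (h : EuclideanSpace ℝ (Fin n) → ℝ) (hpos : ∀ x, 0 ≤ h x)
    (hint : Integrable h volume) (hmass : ∫ x, h x = 1)
    (S : Set (EuclideanSpace ℝ (Fin n))) (hS : S.Countable)
    (htile : ∀ᵐ w : EuclideanSpace ℝ (Fin n) ∂volume,
      ∑' α : S, h (w - (α : EuclideanSpace ℝ (Fin n))) = 1) :
    ∃ C > 0, ∀ x : EuclideanSpace ℝ (Fin n),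
      ∃ s ∈ S, ∀ i : Fin n, x i ≤ s i ∧ s i ≤ x i + C := by
  set ν := volume.withDensity fun x => ENNReal.ofReal (h x)
  have hν : IsProbabilityMeasure ν := ⟨by
    rw [withDensity_apply _ MeasurableSet.univ, Measure.restrict_univ,
      ← ofReal_integral_eq_lintegral_ofReal hint (.of_forall hpos), hmass, ENNReal.ofReal_one]⟩
  have htile' : ∀ᵐ w, ∑' α : S, ENNReal.ofReal (h (w - α)) = 1 := by
    filter_upwards [htile] with w hw
    have hsum : Summable fun α : S => h (w - α) := by
      by_contra hc
      simp [tsum_eq_zero_of_not_summable hc] at hw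
    rw [← ENNReal.ofReal_tsum_of_nonneg (fun _ => hpos _) hsum, hw, ENNReal.ofReal_one]
  obtain ⟨R, hR, hνR⟩ := exists_pos_measure_compl_closedBall_lt ν 0
    (ENNReal.div_pos one_ne_zero (by simp) : (0 : ℝ≥0∞) < 1 / (2 ^ n + 1))
  refine ⟨4 * R, by positivity, fun x => ?_⟩
  by_contra! hx
  have hK := EuclideanSpace.withDensity_closedBall_le_of_forall_notMem_cube
    (ENNReal.measurable_ofReal.comp_aemeasurable hint.1.aemeasurable) hS htile' hR
    (c := fun i => x i + 2 * R) fun s hs hsc => by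
      obtain ⟨i, hi⟩ := hx s hs
      have := abs_le.1 (hsc i)
      linarith [hi (by linarith)]
  refine lt_irrefl (1 : ℝ≥0∞) ?_
  calc (1 : ℝ≥0∞) = ν (closedBall 0 R) + ν (closedBall 0 R)ᶜ :=
        (measure_add_measure_compl measurableSet_closedBall).trans measure_univ |>.symm
    _ ≤ (2 ^ n + 1) * ν (closedBall 0 R)ᶜ := by
        rw [add_one_mul]; gcongr; exact hK
    _ < 1 := ENNReal.mul_lt_of_lt_div' hνR

/-- If a nonnegative integrable `h` on `ℝ^n` with `∫ h = 1` tiles `ℝ^n` at level `1` by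
translates along a countable set `S`, then there is `C > 0` such that every cube of side
length `C` contains at least one point of `S`. -/
theorem tiling_implies_well_distributed {n : ℕ} (hn : 1 ≤ n)
    (h : EuclideanSpace ℝ (Fin n) → ℝ) (hpos : ∀ x, 0 ≤ h x)
    (hint : Integrable h volume) (hmass : ∫ x, h x = 1)
    (S : Set (EuclideanSpace ℝ (Fin n))) (hS : S.Countable)
    (htile : ∀ᵐ w : EuclideanSpace ℝ (Fin n) ∂volume,
      ∑' α : S, h (w - (α : EuclideanSpace ℝ (Fin n))) = 1) :
    ∃ C > 0, ∀ x : EuclideanSpace ℝ (Fin n),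
      ∃ s ∈ S, ∀ i : Fin n, x i ≤ s i ∧ s i ≤ x i + C :=
  tiling_implies_well_distributed_general h hpos hint hmass S hS htile
end

section
/- Let E ⊂ ℝ^d be a bounded measurable set of positive measure, A, B ⊂ ℝ^d countable, and suppose {χ_E(x−a)e^{−2πi x·b}}_{(a,b)∈A×B} is an orthonormal basis for L²(ℝ^d) (after normalization by |E|^{−1/2}). Then {e^{−2πi x·b}}_{b∈B} is an orthogonal basis for L²(E). -/
open MeasureTheory Real
open scoped RealInnerProductSpace

/-- The normalized Gabor window function of a set `E`:
`x ↦ |E|^{-1/2} χ_E(x - a) e^{-2πi x·b}` for `p = (a,b)`. -/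
noncomputable def gaborFun {d : ℕ} (E : Set (EuclideanSpace ℝ (Fin d)))
    (p : EuclideanSpace ℝ (Fin d) × EuclideanSpace ℝ (Fin d))
    (x : EuclideanSpace ℝ (Fin d)) : ℂ :=
  E.indicator (fun _ => (((volume E).toReal ^ (-(1:ℝ)/2) : ℝ) : ℂ)) (x - p.1) *
    Complex.exp (-2 * π * Complex.I * ((⟪x, p.2⟫ : ℝ) : ℂ))

/-!
Since `gaborFun E (a, b) * conj (gaborFun E (a', b'))` is
`|E|⁻¹ χ_{E+a} χ_{E+a'} e^{-2πi x·(b-b')}`, orthogonality of the atoms at `(a, b)` and `(a', b)` with `a ≠ a'` forces the translates `E + a`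
and `E + a'` to be almost disjoint, while orthogonality of the atoms at `(a₀, b)` and `(a₀, b')`
is, after translating by `a₀`, orthogonality of the exponentials `e_b`, `e_{b'}` on `E`.
If `f ∈ L²(E)` is orthogonal to every `e_b`, its translate to `E + a₀` is orthogonal to the atoms
at `a₀` by the same computation and to all other atoms by disjointness of supports, so it
vanishes by completeness of the Gabor system.
-/

section Translation

variable {G F : Type*} [AddGroup G] [MeasurableSpace G] [MeasurableAdd G]
  {μ : Measure G} [μ.IsAddRightInvariant] {E : Set G}

theorem integral_indicator_comp_sub_mul (hE : MeasurableSet E) (φ h : G → ℂ) (a : G) :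
    ∫ x, E.indicator φ (x - a) * h x ∂μ = ∫ y in E, φ y * h (y + a) ∂μ := by
  rw [← integral_add_right_eq_self _ a, ← integral_indicator hE]
  simp only [add_sub_cancel_right]
  congr 1
  funext y
  by_cases hy : y ∈ E <;> simp [hy]

variable [NormedAddCommGroup F]

theorem memLp_indicator_comp_sub (hE : MeasurableSet E) {f : G → F} {p : ENNReal}
    (hf : MemLp f p (μ.restrict E)) (a : G) : MemLp (fun x => E.indicator f (x - a)) p μ :=
  ((memLp_indicator_iff_restrict hE).2 hf).comp_measurePreserving
    (measurePreserving_sub_right μ a)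

theorem ae_restrict_eq_zero_of_indicator_comp_sub (hE : MeasurableSet E) {f : G → F} {a : G}
    (h : (fun x => E.indicator f (x - a)) =ᵐ[μ] 0) : f =ᵐ[μ.restrict E] 0 := by
  have h' := (measurePreserving_add_right μ a).quasiMeasurePreserving.ae_eq_comp h
  simp only [Function.comp_def, add_sub_cancel_right] at h'
  rw [ae_eq_restrict_iff_indicator_ae_eq hE, Set.indicator_zero']
  exact h'

end Translation

theorem indicator_one_not_ae_eq_zero {G : Type*} [MeasurableSpace G] {μ : Measure G} {E : Set G}
    (hE : MeasurableSet E) (hμE : μ E ≠ 0) : ¬ E.indicator (1 : G → ℂ) =ᵐ[μ] 0 := by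
  intro h
  have h' := (ae_eq_restrict_iff_indicator_ae_eq (μ := μ) (f := (1 : G → ℂ)) (g := 0) hE).2
    (by rwa [Set.indicator_zero'])
  simp [Filter.EventuallyEq, hμE] at h'

theorem Complex.exp_mul_inner_add_left {V : Type*} [NormedAddCommGroup V]
    [InnerProductSpace ℝ V] (z : ℂ) (y a u : V) :
    Complex.exp (z * ((⟪y + a, u⟫ : ℝ) : ℂ)) =
      Complex.exp (z * ((⟪y, u⟫ : ℝ) : ℂ)) * Complex.exp (z * ((⟪a, u⟫ : ℝ) : ℂ)) := by
  rw [← Complex.exp_add, inner_add_left, Complex.ofReal_add, mul_add]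

theorem Complex.conj_exp_neg_two_pi_I_mul (r : ℝ) :
    (starRingEnd ℂ) (Complex.exp (-2 * π * Complex.I * r)) =
      Complex.exp (2 * π * Complex.I * r) := by
  rw [← Complex.exp_conj]
  simp [map_ofNat]

theorem Real.rpow_neg_half_mul_self {t : ℝ} (ht : 0 ≤ t) :
    t ^ (-(1:ℝ)/2) * t ^ (-(1:ℝ)/2) = t⁻¹ := by
  rw [← Real.rpow_add' ht (by norm_num)]
  norm_num [Real.rpow_neg_one]

section Gabor

variable {d : ℕ} {E : Set (EuclideanSpace ℝ (Fin d))}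

theorem conj_gaborFun (a b x : EuclideanSpace ℝ (Fin d)) :
    (starRingEnd ℂ) (gaborFun E (a, b) x) =
      E.indicator (fun _ => (((volume E).toReal ^ (-(1:ℝ)/2) : ℝ) : ℂ)) (x - a) *
        Complex.exp (2 * π * Complex.I * ((⟪x, b⟫ : ℝ) : ℂ)) := by
  rw [gaborFun, map_mul, Complex.conj_exp_neg_two_pi_I_mul]
  by_cases hx : x - a ∈ E <;> simp [hx]

theorem gaborFun_mul_conj (a a' b b' x : EuclideanSpace ℝ (Fin d)) :
    gaborFun E (a, b) x * (starRingEnd ℂ) (gaborFun E (a', b') x) =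
      E.indicator (fun _ => (((volume E).toReal ^ (-(1:ℝ)/2) : ℝ) : ℂ)) (x - a) *
        E.indicator (fun _ => (((volume E).toReal ^ (-(1:ℝ)/2) : ℝ) : ℂ)) (x - a') *
        Complex.exp (-2 * π * Complex.I * ((⟪x, b - b'⟫ : ℝ) : ℂ)) := by
  rw [conj_gaborFun, gaborFun, mul_mul_mul_comm, ← Complex.exp_add, inner_sub_right]
  push_cast
  ring_nf

theorem integral_gaborFun_mul_conj_of_fst_eq (hE : MeasurableSet E)
    (a b b' : EuclideanSpace ℝ (Fin d)) :
    ∫ x, gaborFun E (a, b) x * (starRingEnd ℂ) (gaborFun E (a, b') x) =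
      ((((volume E).toReal⁻¹ : ℝ) : ℂ) *
          Complex.exp (-2 * π * Complex.I * ((⟪a, b - b'⟫ : ℝ) : ℂ))) *
        ∫ y in E, Complex.exp (-2 * π * Complex.I * ((⟪y, b - b'⟫ : ℝ) : ℂ)) := by
  have h (x : EuclideanSpace ℝ (Fin d)) :
      gaborFun E (a, b) x * (starRingEnd ℂ) (gaborFun E (a, b') x) =
        E.indicator (fun _ => (((volume E).toReal⁻¹ : ℝ) : ℂ)) (x - a) *
          Complex.exp (-2 * π * Complex.I * ((⟪x, b - b'⟫ : ℝ) : ℂ)) := by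
    rw [gaborFun_mul_conj]
    by_cases hx : x - a ∈ E <;>
      simp [hx, ← Complex.ofReal_mul, Real.rpow_neg_half_mul_self ENNReal.toReal_nonneg]
  simp_rw [h, integral_indicator_comp_sub_mul hE, Complex.exp_mul_inner_add_left,
    ← integral_const_mul]
  congr 1
  funext y
  ring

theorem integral_gaborFun_mul_conj_of_snd_eq (hE : MeasurableSet E)
    (a a' b : EuclideanSpace ℝ (Fin d)) :
    ∫ x, gaborFun E (a, b) x * (starRingEnd ℂ) (gaborFun E (a', b) x) =
      (volume ((· - a) ⁻¹' E ∩ (· - a') ⁻¹' E)).toReal * (((volume E).toReal⁻¹ : ℝ) : ℂ) := by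
  have hS : MeasurableSet ((· - a) ⁻¹' E ∩ (· - a') ⁻¹' E) :=
    (hE.preimage (measurable_sub_const a)).inter (hE.preimage (measurable_sub_const a'))
  have h (x : EuclideanSpace ℝ (Fin d)) :
      gaborFun E (a, b) x * (starRingEnd ℂ) (gaborFun E (a', b) x) =
        ((· - a) ⁻¹' E ∩ (· - a') ⁻¹' E).indicator
          (fun _ => (((volume E).toReal⁻¹ : ℝ) : ℂ)) x := by
    rw [gaborFun_mul_conj]
    by_cases hx : x - a ∈ E <;> by_cases hx' : x - a' ∈ E <;>
      simp [hx, hx', ← Complex.ofReal_mul, Real.rpow_neg_half_mul_self ENNReal.toReal_nonneg]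
  simp_rw [h, integral_indicator_const _ hS]
  rfl

theorem aedisjoint_of_integral_gaborFun_mul_conj_eq_zero (hE : MeasurableSet E)
    (hE0 : (volume E).toReal ≠ 0) {a a' b : EuclideanSpace ℝ (Fin d)}
    (h : ∫ x, gaborFun E (a, b) x * (starRingEnd ℂ) (gaborFun E (a', b) x) = 0) :
    AEDisjoint volume ((· - a) ⁻¹' E) ((· - a') ⁻¹' E) := by
  rw [integral_gaborFun_mul_conj_of_snd_eq hE] at h
  have hfin : volume ((· - a) ⁻¹' E ∩ (· - a') ⁻¹' E) ≠ ⊤ := by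
    refine ne_top_of_le_ne_top ?_ (measure_mono Set.inter_subset_left)
    rw [(measurePreserving_sub_right volume a).measure_preimage hE.nullMeasurableSet]
    exact (ENNReal.toReal_ne_zero.1 hE0).2
  have hzero : (volume ((· - a) ⁻¹' E ∩ (· - a') ⁻¹' E)).toReal = 0 := by
    simpa [hE0] using h
  exact ((ENNReal.toReal_eq_zero_iff _).1 hzero).resolve_right hfin

theorem integral_indicator_comp_sub_mul_conj_gaborFun (hE : MeasurableSet E)
    (f : EuclideanSpace ℝ (Fin d) → ℂ) (a b : EuclideanSpace ℝ (Fin d)) :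
    ∫ x, E.indicator f (x - a) * (starRingEnd ℂ) (gaborFun E (a, b) x) =
      ((((volume E).toReal ^ (-(1:ℝ)/2) : ℝ) : ℂ) *
          Complex.exp (2 * π * Complex.I * ((⟪a, b⟫ : ℝ) : ℂ))) *
        ∫ y in E, f y * Complex.exp (2 * π * Complex.I * ((⟪y, b⟫ : ℝ) : ℂ)) := by
  have h (x : EuclideanSpace ℝ (Fin d)) :
      E.indicator f (x - a) * (starRingEnd ℂ) (gaborFun E (a, b) x) =
        E.indicator (fun y => (((volume E).toReal ^ (-(1:ℝ)/2) : ℝ) : ℂ) * f y) (x - a) *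
          Complex.exp (2 * π * Complex.I * ((⟪x, b⟫ : ℝ) : ℂ)) := by
    rw [conj_gaborFun]
    by_cases hx : x - a ∈ E <;> simp [hx]
    ring
  simp_rw [h, integral_indicator_comp_sub_mul hE, Complex.exp_mul_inner_add_left,
    ← integral_const_mul]
  congr 1
  funext y
  ring

theorem integral_indicator_comp_sub_mul_conj_gaborFun_of_aedisjoint
    (f : EuclideanSpace ℝ (Fin d) → ℂ) {a a' b : EuclideanSpace ℝ (Fin d)}
    (h : AEDisjoint volume ((· - a) ⁻¹' E) ((· - a') ⁻¹' E)) :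
    ∫ x, E.indicator f (x - a') * (starRingEnd ℂ) (gaborFun E (a, b) x) = 0 := by
  refine integral_eq_zero_of_ae ?_
  filter_upwards [measure_eq_zero_iff_ae_notMem.1 h] with x hx
  rw [conj_gaborFun]
  rcases not_and_or.1 hx with hx | hx
  · simp [Set.indicator_of_notMem (show x - a ∉ E from hx)]
  · simp [Set.indicator_of_notMem (show x - a' ∉ E from hx)]

end Gabor

theorem separable_gabor_gives_exponential_basis_general {d : ℕ}
    (E : Set (EuclideanSpace ℝ (Fin d))) (hEm : MeasurableSet E)
    (hEb : Bornology.IsBounded E) (hEpos : 0 < volume E)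
    (A B : Set (EuclideanSpace ℝ (Fin d)))
    (horth : ∀ p ∈ A ×ˢ B, ∀ q ∈ A ×ˢ B, p ≠ q →
      ∫ x, gaborFun E p x * (starRingEnd ℂ) (gaborFun E q x) = 0)
    (hcomplete : ∀ f : EuclideanSpace ℝ (Fin d) → ℂ, MemLp f 2 volume →
      (∀ p ∈ A ×ˢ B, ∫ x, f x * (starRingEnd ℂ) (gaborFun E p x) = 0) →
      f =ᵐ[volume] 0) :
    (∀ b ∈ B, ∀ b' ∈ B, b ≠ b' →
      ∫ x in E, Complex.exp (-2 * π * Complex.I * ((⟪x, b - b'⟫ : ℝ) : ℂ)) = 0) ∧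
    (∀ f : EuclideanSpace ℝ (Fin d) → ℂ, MemLp f 2 (volume.restrict E) →
      (∀ b ∈ B, ∫ x in E, f x * Complex.exp (2 * π * Complex.I * ((⟪x, b⟫ : ℝ) : ℂ)) = 0) →
      f =ᵐ[volume.restrict E] 0) := by
  have hEfin : volume E ≠ ⊤ := hEb.measure_lt_top.ne
  have hE0 : (volume E).toReal ≠ 0 := ENNReal.toReal_ne_zero.2 ⟨hEpos.ne', hEfin⟩
  obtain ⟨⟨a₀, b₀⟩, ha₀, hb₀⟩ : (A ×ˢ B).Nonempty := by
    by_contra hempty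
    refine indicator_one_not_ae_eq_zero hEm hEpos.ne' (hcomplete _ ?_ ?_)
    · exact memLp_indicator_const 2 hEm 1 (Or.inr hEfin)
    · simp [Set.not_nonempty_iff_eq_empty.1 hempty]
  refine ⟨fun b hb b' hb' hbb' => ?_, fun f hf hforth => ?_⟩
  · have h := horth (a₀, b) ⟨ha₀, hb⟩ (a₀, b') ⟨ha₀, hb'⟩ (by simpa using hbb')
    rw [integral_gaborFun_mul_conj_of_fst_eq hEm] at h
    refine (mul_eq_zero.1 h).resolve_left (mul_ne_zero ?_ (Complex.exp_ne_zero _))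
    exact_mod_cast inv_ne_zero hE0
  · refine ae_restrict_eq_zero_of_indicator_comp_sub hEm (a := a₀) (hcomplete _ ?_ ?_)
    · exact memLp_indicator_comp_sub hEm hf a₀
    rintro ⟨a, b⟩ ⟨ha, hb⟩
    rcases eq_or_ne a a₀ with rfl | hne
    · rw [integral_indicator_comp_sub_mul_conj_gaborFun hEm, hforth b hb, mul_zero]
    · refine integral_indicator_comp_sub_mul_conj_gaborFun_of_aedisjoint f ?_
      refine aedisjoint_of_integral_gaborFun_mul_conj_eq_zero hEm hE0 (b := b₀) ?_
      exact horth (a, b₀) ⟨ha, hb₀⟩ (a₀, b₀) ⟨ha₀, hb₀⟩ (by simpa using hne)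

/-- If the Gabor system with window `|E|^{-1/2}χ_E` and separable spectrum `A × B` is an
orthonormal basis for `L²(ℝ^d)`, then `{e^{-2πi x·b}}_{b∈B}` is an orthogonal basis for
`L²(E)`: the exponentials are mutually orthogonal on `E` and complete in `L²(E)`. -/
theorem separable_gabor_gives_exponential_basis {d : ℕ} (hd : 1 ≤ d)
    (E : Set (EuclideanSpace ℝ (Fin d))) (hEm : MeasurableSet E)
    (hEb : Bornology.IsBounded E) (hEpos : 0 < volume E)
    (A B : Set (EuclideanSpace ℝ (Fin d))) (hA : A.Countable) (hB : B.Countable)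
    (horth : ∀ p ∈ A ×ˢ B, ∀ q ∈ A ×ˢ B, p ≠ q →
      ∫ x, gaborFun E p x * (starRingEnd ℂ) (gaborFun E q x) = 0)
    (hnorm : ∀ p ∈ A ×ˢ B, ∫ x, ‖gaborFun E p x‖ ^ 2 = 1)
    (hcomplete : ∀ f : EuclideanSpace ℝ (Fin d) → ℂ, MemLp f 2 volume →
      (∀ p ∈ A ×ˢ B, ∫ x, f x * (starRingEnd ℂ) (gaborFun E p x) = 0) →
      f =ᵐ[volume] 0) :
    (∀ b ∈ B, ∀ b' ∈ B, b ≠ b' →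
      ∫ x in E, Complex.exp (-2 * π * Complex.I * ((⟪x, b - b'⟫ : ℝ) : ℂ)) = 0) ∧
    (∀ f : EuclideanSpace ℝ (Fin d) → ℂ, MemLp f 2 (volume.restrict E) →
      (∀ b ∈ B, ∫ x in E, f x * Complex.exp (2 * π * Complex.I * ((⟪x, b⟫ : ℝ) : ℂ)) = 0) →
      f =ᵐ[volume.restrict E] 0) :=
  separable_gabor_gives_exponential_basis_general E hEm hEb hEpos A B horth hcomplete
end

section
/- Let E ⊂ ℝ^d be a bounded measurable set of positive measure and suppose {χ_E(x−a)e^{−2πi x·b}}_{(a,b)∈A×B} (with S = A×B) is an orthonormal basis for L²(ℝ^d) after normalization. Then E tiles ℝ^d by translations along A, i.e., ∑_{a∈A} χ_E(x−a) = 1 for almost every x ∈ ℝ^d. -/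
open MeasureTheory Real
open scoped RealInnerProductSpace

/-!
Two Gabor atoms with the same frequency `b` multiply to `|E|⁻¹` times the indicator of the
overlap of their translates of `E`, so orthogonality of `(a, b)` and `(a', b)` makes the
translates `a + E` and `a' + E` overlap in a null set. Conversely, every atom vanishes off
`⋃_{a ∈ A} (a + E)`, so the indicator of any finite-measure piece of the complement is orthogonal
to the whole system and completeness makes that complement null. Hence a.e. `x` lies in exactly
one translate.
-/

open Function Set ComplexConjugate
open scoped ENNReal

theorem measure_eq_zero_of_complete_of_eqOn_zero {α ι : Type*} [MeasurableSpace α]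
    {μ : Measure α} [SigmaFinite μ] {g : ι → α → ℂ} {S : Set ι}
    (hcomplete : ∀ f : α → ℂ, MemLp f 2 μ →
      (∀ p ∈ S, ∫ x, f x * conj (g p x) ∂μ = 0) → f =ᵐ[μ] 0)
    {T : Set α} (hT : MeasurableSet T) (hg : ∀ p ∈ S, EqOn (g p) 0 T) : μ T = 0 := by
  refine (isCountablySpanning_spanningSets μ).null_of_forall_inter_null ?_
  rintro _ ⟨n, rfl⟩
  set U := T ∩ spanningSets μ n
  have hU : MeasurableSet U := hT.inter (measurableSet_spanningSets μ n)
  have hUfin : μ U ≠ ∞ :=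
    (measure_lt_top_mono inter_subset_right (measure_spanningSets_lt_top μ n)).ne
  have horth : ∀ p ∈ S, ∫ x, U.indicator 1 x * conj (g p x) ∂μ = 0 := fun p hp => by
    refine integral_eq_zero_of_ae (Filter.Eventually.of_forall fun x => ?_)
    by_cases hx : x ∈ U
    · simp [hg p hp hx.1]
    · simp [hx]
  have h := hcomplete _ (memLp_indicator_const 2 hU 1 (Or.inr hUfin)) horth
  exact measure_mono_null (fun x hx => by simp [hx]) (ae_iff.mp h)

theorem ae_eq_of_mem_of_mem_of_pairwise_aedisjoint {α ι : Type*} [MeasurableSpace α]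
    {μ : Measure α} {A : Set ι} (hA : A.Countable) {s : ι → Set α}
    (hs : A.Pairwise (AEDisjoint μ on s)) :
    ∀ᵐ x ∂μ, ∀ a ∈ A, ∀ a' ∈ A, x ∈ s a → x ∈ s a' → a = a' := by
  refine (ae_ball_iff hA).mpr fun a ha => (ae_ball_iff hA).mpr fun a' ha' => ?_
  by_cases hne : a = a'
  · exact Filter.Eventually.of_forall fun _ _ _ => hne
  · filter_upwards [measure_eq_zero_iff_ae_notMem.mp (hs ha ha' hne)] with x hx h h'
    exact absurd ⟨h, h'⟩ hx

theorem tsum_indicator_sub_eq_of_existsUnique {G M : Type*} [AddGroup G] [AddCommMonoid M]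
    [TopologicalSpace M] {E A : Set G} {x a : G} (c : M) (ha : a ∈ A) (hxa : x - a ∈ E)
    (huniq : ∀ a' ∈ A, x - a' ∈ E → a' = a) :
    ∑' a : A, E.indicator (fun _ => c) (x - a) = c := by
  rw [tsum_eq_single ⟨a, ha⟩ fun a' hne =>
    indicator_of_notMem (fun h => hne (Subtype.ext (huniq a' a'.2 h))) _]
  exact indicator_of_mem hxa _

section Gabor

variable {d : ℕ} {E : Set (EuclideanSpace ℝ (Fin d))}

theorem gaborFun_eq_zero_of_sub_notMem {p : EuclideanSpace ℝ (Fin d) × EuclideanSpace ℝ (Fin d)}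
    {x : EuclideanSpace ℝ (Fin d)}
    (h : x - p.1 ∉ E) : gaborFun E p x = 0 := by
  simp [gaborFun, indicator_of_notMem h]

theorem ae_exists_sub_mem_of_complete {A B : Set (EuclideanSpace ℝ (Fin d))}
    (hEm : MeasurableSet E) (hA : A.Countable)
    (hcomplete : ∀ f : EuclideanSpace ℝ (Fin d) → ℂ, MemLp f 2 volume →
      (∀ p ∈ A ×ˢ B, ∫ x, f x * conj (gaborFun E p x) = 0) → f =ᵐ[volume] 0) :
    ∀ᵐ x, ∃ a ∈ A, x - a ∈ E := by
  have hT : MeasurableSet {x | ¬ ∃ a ∈ A, x - a ∈ E} := by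
    convert (MeasurableSet.biUnion hA fun a _ => hEm.preimage (measurable_sub_const a)).compl
    ext; simp
  refine ae_iff.mpr (measure_eq_zero_of_complete_of_eqOn_zero hcomplete hT ?_)
  rintro p ⟨hpA, -⟩ x hx
  exact gaborFun_eq_zero_of_sub_notMem fun h => hx ⟨p.1, hpA, h⟩

theorem gaborFun_mul_conj_gaborFun (a a' b x : EuclideanSpace ℝ (Fin d)) :
    gaborFun E (a, b) x * conj (gaborFun E (a', b) x) =
      ({x | x - a ∈ E} ∩ {x | x - a' ∈ E}).indicator (fun _ => ((volume E).toReal : ℂ)⁻¹) x := by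
  simp only [gaborFun]
  set t := (volume E).toReal
  set c := t ^ (-(1:ℝ)/2)
  set z := Complex.exp (-2 * π * Complex.I * ((⟪x, b⟫ : ℝ) : ℂ))
  have hc : c * c = t⁻¹ := by
    rw [← rpow_add' ENNReal.toReal_nonneg (by norm_num), ← rpow_neg_one]
    congr 1
    norm_num
  have hz : z * conj z = 1 := by
    rw [← Complex.exp_conj, ← Complex.exp_add, Complex.add_conj]
    simp
  by_cases h : x ∈ {x | x - a ∈ E} ∩ {x | x - a' ∈ E}
  · rw [indicator_of_mem h, indicator_of_mem (show x - a ∈ E from h.1),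
      indicator_of_mem (show x - a' ∈ E from h.2), map_mul, Complex.conj_ofReal]
    calc (c : ℂ) * z * (c * conj z) = ((c * c : ℝ) : ℂ) * (z * conj z) := by push_cast; ring
      _ = (t : ℂ)⁻¹ := by rw [hc, hz, mul_one, Complex.ofReal_inv]
  · rw [indicator_of_notMem h]
    rcases not_and_or.mp h with h | h <;> simp [indicator_of_notMem (show _ - _ ∉ E from h)]

theorem volume_inter_eq_zero_of_integral_gaborFun_mul_conj_eq_zero (hEm : MeasurableSet E)
    (hEfin : volume E ≠ ∞) (hE0 : volume E ≠ 0) {a a' b : EuclideanSpace ℝ (Fin d)}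
    (h : ∫ x, gaborFun E (a, b) x * conj (gaborFun E (a', b) x) = 0) :
    volume ({x | x - a ∈ E} ∩ {x | x - a' ∈ E}) = 0 := by
  have hmeas : ∀ c, MeasurableSet {x | x - c ∈ E} := fun c =>
    hEm.preimage (measurable_sub_const c)
  have hfin : volume ({x | x - a ∈ E} ∩ {x | x - a' ∈ E}) ≠ ∞ := by
    refine (measure_lt_top_mono inter_subset_left ?_).ne
    simpa [sub_eq_add_neg, preimage, lt_top_iff_ne_top] using
      (measure_preimage_add_right volume (-a) E).trans_ne hEfin
  simp_rw [gaborFun_mul_conj_gaborFun,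
    integral_indicator_const _ ((hmeas a).inter (hmeas a'))] at h
  rw [smul_eq_zero, measureReal_eq_zero_iff hfin] at h
  refine h.resolve_right ?_
  simpa using ENNReal.toReal_ne_zero.mpr ⟨hE0, hEfin⟩

end Gabor

theorem separable_gabor_implies_tiling_general {d : ℕ}
    (E : Set (EuclideanSpace ℝ (Fin d))) (hEm : MeasurableSet E)
    (hEb : Bornology.IsBounded E) (hEpos : 0 < volume E)
    (A B : Set (EuclideanSpace ℝ (Fin d))) (hA : A.Countable)
    (horth : ∀ p ∈ A ×ˢ B, ∀ q ∈ A ×ˢ B, p ≠ q →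
      ∫ x, gaborFun E p x * (starRingEnd ℂ) (gaborFun E q x) = 0)
    (hcomplete : ∀ f : EuclideanSpace ℝ (Fin d) → ℂ, MemLp f 2 volume →
      (∀ p ∈ A ×ˢ B, ∫ x, f x * (starRingEnd ℂ) (gaborFun E p x) = 0) →
      f =ᵐ[volume] 0) :
    ∀ᵐ x : EuclideanSpace ℝ (Fin d) ∂volume,
      ∑' a : A, E.indicator (fun _ => (1 : ℝ)) (x - (a : EuclideanSpace ℝ (Fin d))) = 1 := by
  have hEfin : volume E ≠ ∞ := hEb.measure_lt_top.ne
  obtain ⟨b, hb⟩ : B.Nonempty := by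
    by_contra! hB
    refine hEpos.ne' (measure_eq_zero_of_complete_of_eqOn_zero hcomplete hEm ?_)
    simp [hB]
  have hdisj : A.Pairwise (AEDisjoint volume on fun a => {x | x - a ∈ E}) :=
    fun a ha a' ha' hne => volume_inter_eq_zero_of_integral_gaborFun_mul_conj_eq_zero hEm hEfin
      hEpos.ne' (horth (a, b) ⟨ha, hb⟩ (a', b) ⟨ha', hb⟩ (by simpa using hne))
  filter_upwards [ae_exists_sub_mem_of_complete hEm hA hcomplete,
    ae_eq_of_mem_of_mem_of_pairwise_aedisjoint hA hdisj] with x ⟨a, ha, hxa⟩ huniq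
  exact tsum_indicator_sub_eq_of_existsUnique 1 ha hxa fun a' ha' hxa' => huniq a' ha' a ha hxa' hxa

/-- If the Gabor system with window `|E|^{-1/2}χ_E` and separable spectrum `A × B` is an
orthonormal basis for `L²(ℝ^d)`, then `E` tiles `ℝ^d` by translations along `A`:
`∑_{a∈A} χ_E(x-a) = 1` for almost every `x`. -/
theorem separable_gabor_implies_tiling {d : ℕ} (hd : 1 ≤ d)
    (E : Set (EuclideanSpace ℝ (Fin d))) (hEm : MeasurableSet E)
    (hEb : Bornology.IsBounded E) (hEpos : 0 < volume E)
    (A B : Set (EuclideanSpace ℝ (Fin d))) (hA : A.Countable) (hB : B.Countable)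
    (horth : ∀ p ∈ A ×ˢ B, ∀ q ∈ A ×ˢ B, p ≠ q →
      ∫ x, gaborFun E p x * (starRingEnd ℂ) (gaborFun E q x) = 0)
    (hnorm : ∀ p ∈ A ×ˢ B, ∫ x, ‖gaborFun E p x‖ ^ 2 = 1)
    (hcomplete : ∀ f : EuclideanSpace ℝ (Fin d) → ℂ, MemLp f 2 volume →
      (∀ p ∈ A ×ˢ B, ∫ x, f x * (starRingEnd ℂ) (gaborFun E p x) = 0) →
      f =ᵐ[volume] 0) :
    ∀ᵐ x : EuclideanSpace ℝ (Fin d) ∂volume,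
      ∑' a : A, E.indicator (fun _ => (1 : ℝ)) (x - (a : EuclideanSpace ℝ (Fin d))) = 1 :=
  separable_gabor_implies_tiling_general E hEm hEb hEpos A B hA horth hcomplete
end
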